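/- For n ≥ 1 define T_n := ∑_{k=0}^{n} (binom(n,k))² · Ψ_k(0, 1, 1/2) · (Ψ_{n−k}(1, 1, 1/2))². Then T_n = (Ψ_n(1, 1, 1/2))² · (1 + O(n^{−4})); that is, there exists a constant K such that for all n ≥ 1, | T_n / (Ψ_n(1,1,1/2))² − 1 | ≤ K·n^{−4}. -/

import Mathlib

open scoped BigOperators

/-- Number of fixed points of a permutation, i.e. `c₁(σ)`. -/
def fixedPointCount {α : Type*} [DecidableEq α] [Fintype α] (σ : Equiv.Perm α) : ℕ :=
  (Finset.univ.filter fun i => σ i = i).card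

/-- `Ψ_n(a,b,m) = n! ∑_{σ ∈ S_n} a^{c₁(σ)} ∏_{ℓ=2}^n (m b^ℓ)^{c_ℓ(σ)}`. -/
noncomputable def Psi (a b m : ℝ) (n : ℕ) : ℝ :=
  (n.factorial : ℝ) * ∑ σ : Equiv.Perm (Fin n),
    a ^ fixedPointCount σ *
      ∏ ℓ ∈ Finset.Icc 2 n, (m * b ^ ℓ) ^ (σ.cycleType.count ℓ)

/-- `T_n`, the squared degree-2 Bethe partition sum of `N_DE(J_n)`. -/
noncomputable def T (n : ℕ) : ℝ :=
  ∑ k ∈ Finset.range (n + 1),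
    ((n.choose k : ℝ)) ^ 2 * Psi 0 1 (1 / 2) k * (Psi 1 1 (1 / 2) (n - k)) ^ 2

/-!
With `b = 1` the product in `Ψ_n(a, 1, m)` collapses to `m ^ (number of nontrivial cycles)`, so
`Ψ_n(1, 1, 1/2) = n! W_n` with `W_n = cycleWeightSum (1/2) n`, while `0 ≤ Ψ_k(0, 1, 1/2) ≤ (k!)²`.
In `T_n` the `k = 0` term is `Ψ_n(1, 1, 1/2)²` and the `k = 1` term vanishes (`S_1` has no
derangement).

Building a permutation of `n + 1` points from one of `n` points and the image of the new point
creates at most one new nontrivial cycle, so `(n + 1) W_n ≤ 2 W_{n+1}` and hence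
`n (n - 1) ⋯ (n - k + 1) W_{n-k} ≤ 2^k W_n`. The `k`-th term of `T_n` is therefore at most
`4^k / (n ⋯ (n-k+1))² · Ψ_n(1, 1, 1/2)² ≤ 4^k / (k-2)! · Ψ_n(1, 1, 1/2)² / (n(n-1))²`,
and `∑_k 4^k / (k-2)! ≤ 16 e⁴`.
-/

open Equiv Finset

namespace Equiv.Perm

variable {α : Type*} [DecidableEq α] [Fintype α]

-- `σ = c * θ` with `c` the cycle through `x` and `θ` disjoint from `c`; the swap only acts on `c`.
theorem card_cycleType_le_card_cycleType_swap_mul_add_one (σ : Perm α) {x : α}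
    (hx : σ x ≠ x) :
    Multiset.card σ.cycleType ≤ Multiset.card (swap x (σ x) * σ).cycleType + 1 := by
  set c := σ.cycleOf x
  have hc : c ∈ σ.cycleFactorsFinset :=
    cycleOf_mem_cycleFactorsFinset_iff.mpr (mem_support.mpr hx)
  have hcθ : Disjoint c (σ * c⁻¹) := (disjoint_mul_inv_of_mem_cycleFactorsFinset hc).symm
  have hσ : σ = c * (σ * c⁻¹) := by rw [hcθ.commute.eq, inv_mul_cancel_right]
  have hsθ : Disjoint (swap x (c x) * c) (σ * c⁻¹) :=
    hcθ.mono (fun y hy => (mem_support_swap_mul_imp_mem_support_ne hy).1) le_rfl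
  have hσx : σ x = c x := (cycleOf_apply_self σ x).symm
  have hcard := congrArg Multiset.card (hsθ.cycleType_mul)
  rw [mul_assoc, ← hσ, ← hσx] at hcard
  conv_lhs => rw [hσ, hcθ.cycleType_mul, (isCycle_cycleOf σ hx).cycleType]
  simp only [Multiset.card_add, Multiset.card_singleton] at hcard ⊢
  omega

theorem cycleType_decomposeFin_symm_zero {n : ℕ} (e : Perm (Fin n)) :
    (decomposeFin.symm (0, e)).cycleType = e.cycleType := by
  have he : decomposeFin.symm (0, e) = e.extendDomain (finSuccAboveEquiv 0) := by
    ext i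
    refine Fin.cases ?_ (fun j => ?_) i
    · rw [decomposeFin_symm_apply_zero, extendDomain_apply_not_subtype _ _ (by simp)]
    · rw [decomposeFin_symm_apply_succ]
      have hj : j.succ = (finSuccAboveEquiv 0 j : Fin (n + 1)) := by
        simp [finSuccAboveEquiv_apply]
      rw [hj, extendDomain_apply_image]
      simp [finSuccAboveEquiv_apply]
  rw [he, cycleType_extendDomain]

theorem card_cycleType_decomposeFin_symm_le {n : ℕ} (p : Fin (n + 1)) (e : Perm (Fin n)) :
    Multiset.card (decomposeFin.symm (p, e)).cycleType ≤ Multiset.card e.cycleType + 1 := by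
  obtain rfl | hp := eq_or_ne p 0
  · rw [cycleType_decomposeFin_symm_zero]
    exact Nat.le_succ _
  · set σ := decomposeFin.symm (p, e)
    have hσ0 : σ 0 = p := decomposeFin_symm_apply_zero p e
    have hswap : swap 0 (σ 0) * σ = decomposeFin.symm (0, e) := by
      rw [hσ0]
      ext i
      refine Fin.cases ?_ (fun j => ?_) i <;> simp [σ]
    have h := card_cycleType_le_card_cycleType_swap_mul_add_one σ (x := 0) (by rwa [hσ0])
    rwa [hswap, cycleType_decomposeFin_symm_zero] at h

theorem sum_count_cycleType_Icc {n : ℕ} (σ : Perm (Fin n)) :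
    ∑ ℓ ∈ Icc 2 n, σ.cycleType.count ℓ = Multiset.card σ.cycleType := by
  refine Multiset.sum_count_eq_card fun ℓ hℓ =>
    mem_Icc.mpr ⟨two_le_of_mem_cycleType hℓ, ?_⟩
  calc ℓ ≤ σ.support.card := le_card_support_of_mem_cycleType hℓ
    _ ≤ n := (card_le_univ _).trans_eq (Fintype.card_fin n)

end Equiv.Perm

noncomputable def cycleWeightSum (x : ℝ) (n : ℕ) : ℝ :=
  ∑ σ : Perm (Fin n), x ^ Multiset.card σ.cycleType

section cycleWeightSum

variable {x : ℝ}

theorem one_le_cycleWeightSum (hx : 0 ≤ x) (n : ℕ) : 1 ≤ cycleWeightSum x n := by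
  simpa [cycleWeightSum] using
    single_le_sum (f := fun σ : Perm (Fin n) => x ^ Multiset.card σ.cycleType)
      (fun σ _ => pow_nonneg hx _) (mem_univ 1)

theorem succ_mul_mul_cycleWeightSum_le (hx₀ : 0 ≤ x) (hx₁ : x ≤ 1) (n : ℕ) :
    (n + 1) * x * cycleWeightSum x n ≤ cycleWeightSum x (n + 1) := by
  calc (n + 1) * x * cycleWeightSum x n
      = ∑ pe : Fin (n + 1) × Perm (Fin n), x ^ (Multiset.card pe.2.cycleType + 1) := by
        simp only [cycleWeightSum, Fintype.sum_prod_type, sum_const, card_univ, Fintype.card_fin,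
          nsmul_eq_mul, pow_succ, ← sum_mul]
        push_cast
        ring
    _ ≤ ∑ pe : Fin (n + 1) × Perm (Fin n),
          x ^ Multiset.card (Perm.decomposeFin.symm pe).cycleType :=
        sum_le_sum fun pe _ => pow_le_pow_of_le_one hx₀ hx₁
          (Perm.card_cycleType_decomposeFin_symm_le pe.1 pe.2)
    _ = cycleWeightSum x (n + 1) :=
        Equiv.sum_comp Perm.decomposeFin.symm fun σ => x ^ Multiset.card σ.cycleType

theorem descFactorial_mul_pow_mul_cycleWeightSum_le (hx₀ : 0 ≤ x) (hx₁ : x ≤ 1)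
    (m k : ℕ) :
    (m + k).descFactorial k * x ^ k * cycleWeightSum x m ≤ cycleWeightSum x (m + k) := by
  induction k with
  | zero => simp
  | succ k ih =>
    calc ((m + (k + 1)).descFactorial (k + 1) : ℝ) * x ^ (k + 1) * cycleWeightSum x m
        = (m + k + 1) * x * ((m + k).descFactorial k * x ^ k * cycleWeightSum x m) := by
          rw [← add_assoc, Nat.succ_descFactorial_succ, Nat.cast_mul, pow_succ]
          push_cast
          ring
      _ ≤ (m + k + 1) * x * cycleWeightSum x (m + k) := by gcongr
      _ ≤ cycleWeightSum x (m + k + 1) := by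
          exact_mod_cast succ_mul_mul_cycleWeightSum_le hx₀ hx₁ (m + k)

end cycleWeightSum

section Psi

variable {a b m : ℝ}

theorem Psi_b_one (a m : ℝ) (n : ℕ) :
    Psi a 1 m n = n.factorial *
      ∑ σ : Perm (Fin n), a ^ fixedPointCount σ * m ^ Multiset.card σ.cycleType := by
  unfold Psi
  congr 1
  refine sum_congr rfl fun σ _ => ?_
  simp only [one_pow, mul_one, prod_pow_eq_pow_sum, σ.sum_count_cycleType_Icc]

theorem Psi_one_one (m : ℝ) (n : ℕ) : Psi 1 1 m n = n.factorial * cycleWeightSum m n := by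
  simp [Psi_b_one, cycleWeightSum]

theorem Psi_zero_right (a b m : ℝ) : Psi a b m 0 = 1 := by
  simp [Psi, fixedPointCount]

theorem Psi_zero_left_one (b m : ℝ) : Psi 0 b m 1 = 0 := by
  simp [Psi, fixedPointCount]

theorem Psi_nonneg (ha : 0 ≤ a) (hb : 0 ≤ b) (hm : 0 ≤ m) (n : ℕ) : 0 ≤ Psi a b m n := by
  unfold Psi
  positivity

theorem Psi_b_one_le (ha₀ : 0 ≤ a) (ha₁ : a ≤ 1) (hm₀ : 0 ≤ m) (hm₁ : m ≤ 1)
    (n : ℕ) :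
    Psi a 1 m n ≤ n.factorial * n.factorial := by
  rw [Psi_b_one]
  gcongr
  calc ∑ σ : Perm (Fin n), a ^ fixedPointCount σ * m ^ Multiset.card σ.cycleType
      ≤ ∑ _σ : Perm (Fin n), (1 : ℝ) :=
        sum_le_sum fun σ _ =>
          mul_le_one₀ (pow_le_one₀ ha₀ ha₁) (by positivity) (pow_le_one₀ hm₀ hm₁)
    _ = n.factorial := by simp [Fintype.card_perm]

theorem Psi_one_one_pos (hm : 0 ≤ m) (n : ℕ) : 0 < Psi 1 1 m n := by
  rw [Psi_one_one]
  have := one_le_cycleWeightSum hm n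
  positivity

end Psi

theorem Nat.factorial_sub_mul_descFactorial_le {j k n : ℕ} (hjk : j ≤ k) (hkn : k ≤ n) :
    (k - j).factorial * n.descFactorial j ≤ n.descFactorial k := by
  rw [← descFactorial_mul_descFactorial hjk, ← (k - j).descFactorial_self]
  exact Nat.mul_le_mul_right _ (descFactorial_le _ (by omega))

theorem Nat.sq_le_two_mul_descFactorial_two {n : ℕ} (hn : 2 ≤ n) :
    n ^ 2 ≤ 2 * n.descFactorial 2 := by
  obtain ⟨m, rfl⟩ := Nat.exists_eq_add_of_le' hn
  rw [descFactorial_succ, descFactorial_one, show m + 2 - 1 = m + 1 by omega]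
  nlinarith

theorem sum_Icc_four_pow_div_factorial_sub_two_le (n : ℕ) :
    ∑ k ∈ Icc 2 n, (4 : ℝ) ^ k / (k - 2).factorial ≤ 16 * Real.exp 4 := by
  rw [← Ico_add_one_right_eq_Icc, sum_Ico_eq_sum_range]
  simp only [Nat.add_sub_cancel_left, pow_add, mul_div_assoc, ← mul_sum]
  norm_num
  exact Real.sum_le_exp_of_nonneg (by norm_num) _

noncomputable def TSummand (x : ℝ) (n k : ℕ) : ℝ :=
  n.choose k ^ 2 * Psi 0 1 x k * Psi 1 1 x (n - k) ^ 2

section TSummand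

variable {x : ℝ}

theorem TSummand_nonneg (hx : 0 ≤ x) (n k : ℕ) : 0 ≤ TSummand x n k := by
  unfold TSummand
  have := Psi_nonneg le_rfl zero_le_one hx k
  positivity

theorem TSummand_zero_right (x : ℝ) (n : ℕ) : TSummand x n 0 = Psi 1 1 x n ^ 2 := by
  simp [TSummand, Psi_zero_right]

theorem TSummand_one_right (x : ℝ) (n : ℕ) : TSummand x n 1 = 0 := by
  simp [TSummand, Psi_zero_left_one]

theorem sq_descFactorial_mul_pow_mul_TSummand_le (hx₀ : 0 ≤ x) (hx₁ : x ≤ 1) {n k : ℕ}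
    (hkn : k ≤ n) : (n.descFactorial k * x ^ k) ^ 2 * TSummand x n k ≤ Psi 1 1 x n ^ 2 := by
  obtain ⟨m, rfl⟩ := Nat.exists_eq_add_of_le' hkn
  have hW₀ : 0 ≤ cycleWeightSum x m := zero_le_one.trans (one_le_cycleWeightSum hx₀ m)
  have hW := descFactorial_mul_pow_mul_cycleWeightSum_le hx₀ hx₁ m k
  have hfact : ((m + k).choose k * m.factorial * k.factorial : ℝ) = (m + k).factorial := by
    exact_mod_cast Nat.add_choose_mul_factorial_mul_factorial m k
  unfold TSummand
  rw [Nat.add_sub_cancel, Psi_one_one, Psi_one_one]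
  calc ((m + k).descFactorial k * x ^ k) ^ 2 *
        ((m + k).choose k ^ 2 * Psi 0 1 x k * (m.factorial * cycleWeightSum x m) ^ 2)
      ≤ ((m + k).descFactorial k * x ^ k) ^ 2 *
        ((m + k).choose k ^ 2 * (k.factorial * k.factorial) *
          (m.factorial * cycleWeightSum x m) ^ 2) := by
        gcongr
        exact Psi_b_one_le le_rfl zero_le_one hx₀ hx₁ k
    _ = ((m + k).choose k * m.factorial * k.factorial) ^ 2 *
        ((m + k).descFactorial k * x ^ k * cycleWeightSum x m) ^ 2 := by ring
    _ ≤ (m + k).factorial ^ 2 * cycleWeightSum x (m + k) ^ 2 := by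
        rw [hfact]
        gcongr
    _ = ((m + k).factorial * cycleWeightSum x (m + k)) ^ 2 := by ring

end TSummand

theorem T_eq_Psi_sq_add_sum (n : ℕ) :
    T n = Psi 1 1 (1 / 2) n ^ 2 + ∑ k ∈ Icc 2 n, TSummand (1 / 2) n k := by
  have hsub : insert 0 (Icc 2 n) ⊆ range (n + 1) := by
    intro k
    simp only [mem_insert, mem_Icc, mem_range]
    omega
  have hone : ∀ k ∈ range (n + 1), k ∉ insert 0 (Icc 2 n) → TSummand (1 / 2) n k = 0 := by
    intro k hk hk'
    obtain rfl : k = 1 := by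
      simp only [mem_insert, mem_Icc, mem_range] at hk hk'
      omega
    exact TSummand_one_right _ n
  change ∑ k ∈ range (n + 1), TSummand (1 / 2) n k = _
  rw [← sum_subset hsub hone, sum_insert (by simp), TSummand_zero_right]

theorem T_sub_Psi_sq_nonneg (n : ℕ) : 0 ≤ T n - Psi 1 1 (1 / 2) n ^ 2 := by
  rw [T_eq_Psi_sq_add_sum, add_sub_cancel_left]
  exact sum_nonneg fun k _ => TSummand_nonneg (by norm_num) n k

theorem sq_descFactorial_two_mul_TSummand_le {n k : ℕ} (hk : 2 ≤ k) (hkn : k ≤ n) :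
    (n.descFactorial 2 : ℝ) ^ 2 * TSummand (1 / 2) n k
      ≤ 4 ^ k / (k - 2).factorial * Psi 1 1 (1 / 2) n ^ 2 := by
  have hS := TSummand_nonneg (x := 1 / 2) (by norm_num) n k
  have hdesc : ((k - 2).factorial * n.descFactorial 2 : ℝ) ≤ n.descFactorial k := by
    exact_mod_cast Nat.factorial_sub_mul_descFactorial_le hk hkn
  have hfact : (1 : ℝ) ≤ (k - 2).factorial := by exact_mod_cast (k - 2).factorial_pos
  have hfour : (4 : ℝ) ^ k * ((1 / 2) ^ k) ^ 2 = 1 := by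
    rw [← pow_mul, mul_comm k 2, pow_mul, ← mul_pow]
    norm_num
  rw [div_mul_eq_mul_div, le_div_iff₀ (by positivity)]
  calc (n.descFactorial 2 : ℝ) ^ 2 * TSummand (1 / 2) n k * (k - 2).factorial
      ≤ (n.descFactorial 2 : ℝ) ^ 2 * TSummand (1 / 2) n k * (k - 2).factorial ^ 2 := by
        gcongr
        exact le_self_pow₀ hfact two_ne_zero
    _ = ((k - 2).factorial * n.descFactorial 2 : ℝ) ^ 2 * TSummand (1 / 2) n k := by ring
    _ ≤ (n.descFactorial k : ℝ) ^ 2 * TSummand (1 / 2) n k := by gcongr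
    _ = 4 ^ k * ((n.descFactorial k * (1 / 2) ^ k) ^ 2 * TSummand (1 / 2) n k) := by
        linear_combination (-(n.descFactorial k : ℝ) ^ 2 * TSummand (1 / 2) n k) * hfour
    _ ≤ 4 ^ k * Psi 1 1 (1 / 2) n ^ 2 := by
        gcongr
        exact sq_descFactorial_mul_pow_mul_TSummand_le (by norm_num) (by norm_num) hkn

theorem sq_descFactorial_two_mul_T_sub_Psi_sq_le (n : ℕ) :
    (n.descFactorial 2 : ℝ) ^ 2 * (T n - Psi 1 1 (1 / 2) n ^ 2)
      ≤ 16 * Real.exp 4 * Psi 1 1 (1 / 2) n ^ 2 := by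
  rw [T_eq_Psi_sq_add_sum, add_sub_cancel_left, mul_sum]
  calc ∑ k ∈ Icc 2 n, (n.descFactorial 2 : ℝ) ^ 2 * TSummand (1 / 2) n k
      ≤ ∑ k ∈ Icc 2 n, 4 ^ k / (k - 2).factorial * Psi 1 1 (1 / 2) n ^ 2 :=
        sum_le_sum fun k hk =>
          sq_descFactorial_two_mul_TSummand_le (mem_Icc.1 hk).1 (mem_Icc.1 hk).2
    _ = (∑ k ∈ Icc 2 n, (4 : ℝ) ^ k / (k - 2).factorial) * Psi 1 1 (1 / 2) n ^ 2 :=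
        (sum_mul ..).symm
    _ ≤ 16 * Real.exp 4 * Psi 1 1 (1 / 2) n ^ 2 := by
        gcongr
        exact sum_Icc_four_pow_div_factorial_sub_two_le n

theorem pow_four_mul_T_sub_Psi_sq_le {n : ℕ} (hn : 1 ≤ n) :
    (n : ℝ) ^ 4 * (T n - Psi 1 1 (1 / 2) n ^ 2)
      ≤ 64 * Real.exp 4 * Psi 1 1 (1 / 2) n ^ 2 := by
  obtain rfl | hn := hn.eq_or_lt
  · rw [T_eq_Psi_sq_add_sum]
    simp only [Icc_eq_empty_of_lt one_lt_two, sum_empty, add_zero, sub_self, mul_zero]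
    positivity
  have hsq : ((n : ℝ) ^ 2) ^ 2 ≤ (2 * n.descFactorial 2 : ℝ) ^ 2 := by
    gcongr
    exact_mod_cast Nat.sq_le_two_mul_descFactorial_two hn
  calc (n : ℝ) ^ 4 * (T n - Psi 1 1 (1 / 2) n ^ 2)
      ≤ 4 * ((n.descFactorial 2 : ℝ) ^ 2 * (T n - Psi 1 1 (1 / 2) n ^ 2)) := by
        rw [← mul_assoc]
        gcongr
        · exact T_sub_Psi_sq_nonneg n
        · linarith
    _ ≤ 4 * (16 * Real.exp 4 * Psi 1 1 (1 / 2) n ^ 2) :=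
        mul_le_mul_of_nonneg_left (sq_descFactorial_two_mul_T_sub_Psi_sq_le n) zero_le_four
    _ = 64 * Real.exp 4 * Psi 1 1 (1 / 2) n ^ 2 := by ring

/-- `T_n = (Ψ_n(1,1,1/2))² (1 + O(n⁻⁴))`. -/
theorem T_eq_Psi_sq_up_to_n4 :
    ∃ K : ℝ, ∀ n : ℕ, 1 ≤ n →
      |T n / (Psi 1 1 (1 / 2) n) ^ 2 - 1| ≤ K * ((n : ℝ) ^ 4)⁻¹ := by
  refine ⟨64 * Real.exp 4, fun n hn => ?_⟩
  have hP : 0 < Psi 1 1 (1 / 2) n ^ 2 := pow_pos (Psi_one_one_pos (by norm_num) n) 2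
  have hn4 : (0 : ℝ) < (n : ℝ) ^ 4 := by positivity
  rw [div_sub_one hP.ne', abs_of_nonneg (div_nonneg (T_sub_Psi_sq_nonneg n) hP.le),
    div_le_iff₀ hP, ← div_eq_mul_inv, div_mul_eq_mul_div, le_div_iff₀ hn4]
  linarith [pow_four_mul_T_sub_Psi_sq_le hn]
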